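/- Uniqueness of resistant hyperplanes: Let x₁, …, x_n ∈ ℝᵈ and S₁, …, S_{d+1} ⊆ [n] nonempty pairwise disjoint with {x_i : i ∈ S_t} well separable in ℝᵈ. Fix y ∈ ℝⁿ and k_t ∈ [|S_t|] for each t. Then there is at most one affine function β : ℝᵈ → ℝ such that for every t ∈ [d+1], the k_t-th smallest residual among {y_i − β(x_i) : i ∈ S_t} equals zero. -/

import Mathlib

/-!
Suppose `β¹ ≠ β²`, so that `g = β¹ - β²` is a nonzero affine function. If no `x(S_t)` lay strictly
on one side of the hyperplane `g = 0`, each convex hull `conv x(S_t)` would contain a point `r_t`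
with `g r_t = 0`. Well separability makes any such `r_0, …, r_d` affinely independent (a Radon
partition of them would meet both sides of a separating hyperplane), so they span `ℝᵈ` and
`g = 0`. Hence on some `S_t` every residual under `β¹` is strictly smaller than under `β²` (or
vice versa), and then so is the `k_t`-th smallest one, although both are zero.
-/

/-- Evaluation of the affine function `β(p) = ⟨β₁, p⟩ + β₀`. -/
def affEval {d : ℕ} (β : (Fin d → ℝ) × ℝ) (p : Fin d → ℝ) : ℝ :=
  (∑ j, β.1 j * p j) + β.2

/-- The sets `X 0, …, X (m-1)` in `ℝᵈ` are well separable. -/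
def WellSeparable {d m : ℕ} (X : Fin m → Set (Fin d → ℝ)) : Prop :=
  ∀ I J : Finset (Fin m), Disjoint I J →
    ∃ (w : Fin d → ℝ) (c : ℝ),
      (∀ t ∈ I, ∀ p ∈ X t, (∑ j, w j * p j) < c) ∧
      (∀ t ∈ J, ∀ p ∈ X t, c < (∑ j, w j * p j))

/-- The `k`-th smallest value of the multiset `{r i : i ∈ s}` (1-indexed). -/
noncomputable def kthSmallest {n : ℕ} (s : Finset (Fin n)) (r : Fin n → ℝ) (k : ℕ) : ℝ :=
  (Multiset.sort (s.val.map r) (· ≤ ·)).getD (k - 1) 0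

open Finset

namespace List

variable {α : Type*} [LinearOrder α] {l : List α} {j : ℕ}

theorem Pairwise.countP_lt_getElem_le (hl : l.Pairwise (· ≤ ·)) (hj : j < l.length) :
    l.countP (· < l[j]) ≤ j := by
  have htake : (l.take j).countP (· < l[j]) ≤ j := countP_le_length.trans (length_take_le ..)
  have hdrop : (l.drop j).countP (· < l[j]) = 0 := by
    rw [countP_eq_zero, drop_eq_getElem_cons hj]
    rintro b (_ | ⟨_, hb⟩)
    · simp
    · have hmem : l[j] ∈ l.take (j + 1) := mem_take_iff_getElem.2 ⟨j, by omega, rfl⟩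
      simpa using hl.rel_of_mem_take_of_mem_drop hmem hb
  have hsplit : l.countP (· < l[j]) =
      (l.take j).countP (· < l[j]) + (l.drop j).countP (· < l[j]) := by
    rw [← countP_append, take_append_drop]
  omega

theorem Pairwise.lt_countP_le_getElem (hl : l.Pairwise (· ≤ ·)) (hj : j < l.length) :
    j < l.countP (· ≤ l[j]) := by
  have hmem : l[j] ∈ l.drop j := by rw [drop_eq_getElem_cons hj]; exact mem_cons_self
  have htake : (l.take j).countP (· ≤ l[j]) = j := by
    rw [countP_eq_length.2, length_take_of_le hj.le]
    exact fun a ha ↦ by simpa using hl.rel_of_mem_take_of_mem_drop ha hmem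
  have hdrop : 0 < (l.drop j).countP (· ≤ l[j]) := countP_pos_iff.2 ⟨l[j], hmem, by simp⟩
  have hsplit : l.countP (· ≤ l[j]) =
      (l.take j).countP (· ≤ l[j]) + (l.drop j).countP (· ≤ l[j]) := by
    rw [← countP_append, take_append_drop]
  omega

end List

section kthSmallest

variable {n : ℕ} {s : Finset (Fin n)} {k : ℕ}

theorem card_filter_eq_countP_sort (r : Fin n → ℝ) (p : ℝ → Prop) [DecidablePred p] :
    #{i ∈ s | p (r i)} = ((s.val.map r).sort (· ≤ ·)).countP (p ·) := by
  rw [← Multiset.coe_countP, Multiset.sort_eq, Multiset.countP_map]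
  rfl

theorem kthSmallest_eq_getElem (r : Fin n → ℝ) (hk : 1 ≤ k) (hks : k ≤ #s) :
    kthSmallest s r k = ((s.val.map r).sort (· ≤ ·))[k - 1]'(by simp; omega) :=
  List.getD_eq_getElem ..

theorem card_filter_lt_kthSmallest (r : Fin n → ℝ) (hk : 1 ≤ k) (hks : k ≤ #s) :
    #{i ∈ s | r i < kthSmallest s r k} < k := by
  rw [card_filter_eq_countP_sort r (· < kthSmallest s r k), kthSmallest_eq_getElem r hk hks]
  have := (Multiset.pairwise_sort (s.val.map r) (· ≤ ·)).countP_lt_getElem_le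
    (j := k - 1) (by simp; omega)
  omega

theorem le_card_filter_le_kthSmallest (r : Fin n → ℝ) (hk : 1 ≤ k) (hks : k ≤ #s) :
    k ≤ #{i ∈ s | r i ≤ kthSmallest s r k} := by
  rw [card_filter_eq_countP_sort r (· ≤ kthSmallest s r k), kthSmallest_eq_getElem r hk hks]
  have := (Multiset.pairwise_sort (s.val.map r) (· ≤ ·)).lt_countP_le_getElem
    (j := k - 1) (by simp; omega)
  omega

theorem kthSmallest_lt_kthSmallest {f g : Fin n → ℝ} (hk : 1 ≤ k) (hks : k ≤ #s)
    (hfg : ∀ i ∈ s, f i < g i) : kthSmallest s f k < kthSmallest s g k := by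
  by_contra! hgf
  have hsub : {i ∈ s | g i ≤ kthSmallest s g k} ⊆ {i ∈ s | f i < kthSmallest s f k} := by
    intro i
    simp only [mem_filter]
    exact fun ⟨hi, hgi⟩ ↦ ⟨hi, by linarith [hfg i hi]⟩
  have := card_le_card hsub
  have := le_card_filter_le_kthSmallest g hk hks
  have := card_filter_lt_kthSmallest f hk hks
  omega

end kthSmallest

theorem AffineMap.ext_of_affineIndependent {k V P V₂ P₂ ι : Type*} [Field k] [AddCommGroup V]
    [Module k V] [AddTorsor V P] [FiniteDimensional k V] [AddCommGroup V₂] [Module k V₂]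
    [AddTorsor V₂ P₂] [Fintype ι] {p : ι → P} (hp : AffineIndependent k p)
    (hcard : Fintype.card ι = Module.finrank k V + 1) {f g : P →ᵃ[k] P₂}
    (h : ∀ i, f (p i) = g (p i)) : f = g := by
  have hspan := hp.affineSpan_eq_top_iff_card_eq_finrank_add_one.2 hcard
  have heq := AffineMap.eqOn_affineSpan (s := Set.range p) (f := f) (g := g)
    (by rintro _ ⟨i, rfl⟩; exact h i)
  rw [hspan] at heq
  exact AffineMap.ext fun x ↦ heq (AffineSubspace.mem_top k V x)

theorem exists_mem_convexHull_apply_eq_zero {𝕜 E : Type*} [Field 𝕜] [LinearOrder 𝕜]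
    [IsStrictOrderedRing 𝕜] [AddCommGroup E] [Module 𝕜 E] (g : E →ᵃ[𝕜] 𝕜) {X : Set E} {p q : E}
    (hp : p ∈ X) (hq : q ∈ X) (hgp : g p ≤ 0) (hgq : 0 ≤ g q) :
    ∃ r ∈ convexHull 𝕜 X, g r = 0 := by
  have : (0 : 𝕜) ∈ g '' segment 𝕜 p q := by
    rw [image_segment, segment_eq_uIcc]
    exact Set.mem_uIcc.2 (Or.inl ⟨hgp, hgq⟩)
  obtain ⟨r, hr, hr0⟩ := this
  exact ⟨r, segment_subset_convexHull hp hq hr, hr0⟩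

namespace WellSeparable

variable {d : ℕ}

theorem affineIndependent {m : ℕ} {X : Fin m → Set (Fin d → ℝ)} (hX : WellSeparable X)
    {r : Fin m → Fin d → ℝ} (hr : ∀ t, r t ∈ convexHull ℝ (X t)) : AffineIndependent ℝ r := by
  classical
  by_contra hdep
  obtain ⟨I, z, hzI, hzIc⟩ := Convex.radon_partition hdep
  obtain ⟨w, c, hlt, hgt⟩ := hX I.toFinset I.toFinsetᶜ disjoint_compl_right
  have hlin := (dotProductBilin ℝ ℝ w).isLinear
  have hz_lt : ∑ j, w j * z j < c := by
    refine convexHull_min ?_ (convex_halfSpace_lt hlin c) hzI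
    rintro _ ⟨t, ht, rfl⟩
    exact convexHull_min (hlt t (by simpa using ht)) (convex_halfSpace_lt hlin c) (hr t)
  have hz_gt : c < ∑ j, w j * z j := by
    refine convexHull_min ?_ (convex_halfSpace_gt hlin c) hzIc
    rintro _ ⟨t, ht, rfl⟩
    exact convexHull_min (hgt t (by simpa using ht)) (convex_halfSpace_gt hlin c) (hr t)
  exact lt_asymm hz_lt hz_gt

theorem exists_forall_neg_or_forall_pos {X : Fin (d + 1) → Set (Fin d → ℝ)}
    (hX : WellSeparable X) {g : (Fin d → ℝ) →ᵃ[ℝ] ℝ} (hg : g ≠ 0) :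
    ∃ t, (∀ p ∈ X t, g p < 0) ∨ (∀ p ∈ X t, 0 < g p) := by
  by_contra! hcross
  have hzero : ∀ t, ∃ r ∈ convexHull ℝ (X t), g r = 0 := fun t ↦ by
    obtain ⟨⟨q, hq, hgq⟩, ⟨p, hp, hgp⟩⟩ := hcross t
    exact exists_mem_convexHull_apply_eq_zero g hp hq hgp hgq
  choose r hr hgr using hzero
  refine hg (AffineMap.ext_of_affineIndependent (hX.affineIndependent hr) ?_ hgr)
  simp

end WellSeparable

section affEval

variable {d : ℕ}

def affEvalAffineMap (β : (Fin d → ℝ) × ℝ) : (Fin d → ℝ) →ᵃ[ℝ] ℝ :=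
  (dotProductBilin ℝ ℝ β.1).toAffineMap + AffineMap.const ℝ (Fin d → ℝ) β.2

@[simp]
theorem affEvalAffineMap_apply (β : (Fin d → ℝ) × ℝ) (p : Fin d → ℝ) :
    affEvalAffineMap β p = affEval β p :=
  rfl

theorem affEvalAffineMap_injective : Function.Injective (affEvalAffineMap (d := d)) := by
  intro β γ h
  have hβγ (p : Fin d → ℝ) : affEval β p = affEval γ p := by
    simpa using congrArg (· p) h
  have hconst : β.2 = γ.2 := by simpa [affEval] using hβγ 0
  refine Prod.ext (funext fun j ↦ ?_) hconst
  simpa [affEval, hconst, Pi.single_apply] using hβγ (Pi.single j 1)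

end affEval

theorem stmt6_general (d n : ℕ) (x : Fin n → Fin d → ℝ) (S : Fin (d + 1) → Finset (Fin n))
    (hsep : WellSeparable (fun t => x '' ↑(S t)))
    (y : Fin n → ℝ) (k : Fin (d + 1) → ℕ)
    (hk : ∀ t, 1 ≤ k t ∧ k t ≤ (S t).card)
    (β1 β2 : (Fin d → ℝ) × ℝ)
    (h1 : ∀ t, kthSmallest (S t) (fun i => y i - affEval β1 (x i)) (k t) = 0)
    (h2 : ∀ t, kthSmallest (S t) (fun i => y i - affEval β2 (x i)) (k t) = 0) :
    β1 = β2 := by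
  by_contra hne
  set g := affEvalAffineMap β1 - affEvalAffineMap β2
  have hg : g ≠ 0 := sub_ne_zero.2 (affEvalAffineMap_injective.ne hne)
  have hgx (i : Fin n) : g (x i) = affEval β1 (x i) - affEval β2 (x i) := rfl
  obtain ⟨t, hneg | hpos⟩ := hsep.exists_forall_neg_or_forall_pos hg
  · refine (kthSmallest_lt_kthSmallest (hk t).1 (hk t).2 fun i hi ↦ ?_).ne
      ((h2 t).trans (h1 t).symm)
    linarith [hgx i, hneg (x i) ⟨i, hi, rfl⟩]
  · refine (kthSmallest_lt_kthSmallest (hk t).1 (hk t).2 fun i hi ↦ ?_).ne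
      ((h1 t).trans (h2 t).symm)
    linarith [hgx i, hpos (x i) ⟨i, hi, rfl⟩]

/-- Uniqueness of resistant hyperplanes: at most one affine function makes the `k t`-th
smallest residual in every `S t` equal to zero. -/
theorem stmt6 (d n : ℕ) (x : Fin n → Fin d → ℝ) (S : Fin (d + 1) → Finset (Fin n))
    (hne : ∀ t, (S t).Nonempty)
    (hdisj : ∀ t t', t ≠ t' → Disjoint (S t) (S t'))
    (hsep : WellSeparable (fun t => x '' ↑(S t)))
    (y : Fin n → ℝ) (k : Fin (d + 1) → ℕ)
    (hk : ∀ t, 1 ≤ k t ∧ k t ≤ (S t).card)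
    (β1 β2 : (Fin d → ℝ) × ℝ)
    (h1 : ∀ t, kthSmallest (S t) (fun i => y i - affEval β1 (x i)) (k t) = 0)
    (h2 : ∀ t, kthSmallest (S t) (fun i => y i - affEval β2 (x i)) (k t) = 0) :
    β1 = β2 :=
  stmt6_general d n x S hsep y k hk β1 β2 h1 h2
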